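/- arXiv:1703.04954 — 9 statements merged into one kernel-verified Lean document; each statement's English description precedes it below -/
import Mathlib

section
/- Let A, B, C be strings with |A| = M, |B| = N, and C nonempty. If Z is an STR-IC-LCS of A, B, C, then there exist a minimal C-interval [s,f] of A, a minimal C-interval [s',f'] of B, and strings X, Y such that Z = X·C·Y, X is a longest common subsequence of A[1..s-1] and B[1..s'-1], and Y is a longest common subsequence of A[f+1..M] and B[f'+1..N]. -/
namespace StrIcLcs

/-- The 1-based slice `A[s..f]` of a list (empty when `f < s`). -/
def slc {α : Type*} (A : List α) (s f : ℕ) : List α := (A.take f).drop (s - 1)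

/-- `[s,f]` (1-based, `1 ≤ s ≤ f ≤ |A|`) is a minimal `C`-interval of `A`:
`C` is a subsequence of `A[s..f]` but of neither `A[s+1..f]` nor `A[s..f-1]`. -/
def MinCInterval {α : Type*} (A C : List α) (s f : ℕ) : Prop :=
  1 ≤ s ∧ s ≤ f ∧ f ≤ A.length ∧
    C.Sublist (slc A s f) ∧ ¬ C.Sublist (slc A (s + 1) f) ∧ ¬ C.Sublist (slc A s (f - 1))

/-- The maximum length of a common subsequence of `A` and `B`. -/
noncomputable def lcsLen {α : Type*} (A B : List α) : ℕ :=
  sSup {k | ∃ Z : List α, Z.Sublist A ∧ Z.Sublist B ∧ Z.length = k}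

/-- `Z` is a longest common subsequence of `A` and `B`. -/
def IsLCS {α : Type*} (A B Z : List α) : Prop :=
  Z.Sublist A ∧ Z.Sublist B ∧ ∀ W : List α, W.Sublist A → W.Sublist B → W.length ≤ Z.length

/-- `Z` is an STR-IC-LCS of `A, B, C`: a longest string that contains `C` as a
substring and is a common subsequence of `A` and `B`. -/
def IsSTRICLCS {α : Type*} (A B C Z : List α) : Prop :=
  C.IsInfix Z ∧ Z.Sublist A ∧ Z.Sublist B ∧
    ∀ W : List α, C.IsInfix W → W.Sublist A → W.Sublist B → W.length ≤ Z.length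

lemma slc_eq_nil {α : Type*} (A : List α) {s f : ℕ} (h : f ≤ s - 1) : slc A s f = [] := by
  apply List.drop_eq_nil_of_le
  simpa using le_trans (min_le_left _ _) h

lemma slc_one {α : Type*} (A : List α) (k : ℕ) : slc A 1 k = A.take k := by simp [slc]

lemma slc_last {α : Type*} (A : List α) (f : ℕ) : slc A (f + 1) A.length = A.drop f := by
  simp [slc]

lemma decomp {α : Type*} (A : List α) {s f : ℕ} (h2 : s - 1 ≤ f) :
    A = A.take (s - 1) ++ slc A s f ++ A.drop f := by
  have h1 : A.take (s - 1) = (A.take f).take (s - 1) := by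
    rw [List.take_take, min_eq_left h2]
  rw [h1, slc]
  rw [List.take_append_drop, List.take_append_drop]

lemma sublist_of_parts {α : Type*} (A C X Y : List α) {s f : ℕ}
    (h2 : s - 1 ≤ f) (hX : X.Sublist (slc A 1 (s - 1))) (hc : C.Sublist (slc A s f))
    (hY : Y.Sublist (slc A (f + 1) A.length)) : (X ++ C ++ Y).Sublist A := by
  rw [slc_one] at hX
  rw [slc_last] at hY
  have := decomp A h2
  rw [this]
  exact ((hX.append hc).append hY)

/-- Existence of minimal C-interval refinement. -/
lemma exists_min_interval {α : Type*} (A C X Y : List α) (hC : C ≠ [])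
    (h : (X ++ C ++ Y).Sublist A) :
    ∃ s f, (1 ≤ s ∧ s ≤ f ∧ f ≤ A.length ∧
      C.Sublist (slc A s f) ∧ ¬ C.Sublist (slc A (s + 1) f) ∧ ¬ C.Sublist (slc A s (f - 1)))
      ∧ X.Sublist (slc A 1 (s - 1)) ∧ Y.Sublist (slc A (f + 1) A.length) := by
  rw [List.append_assoc, List.append_sublist_iff] at h
  obtain ⟨A1, rest, hA, hX1, h2⟩ := h
  rw [List.append_sublist_iff] at h2
  obtain ⟨A2, A3, hrest, hC2, hY3⟩ := h2
  subst hrest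
  set a := A1.length with ha
  set b := A2.length with hb
  have hbpos : 1 ≤ b := by
    rcases A2 with _ | _
    · exact absurd (List.sublist_nil.mp hC2) hC
    · simp [hb]
  -- base interval [a+1, a+b]
  have hslc0 : slc A (a + 1) (a + b) = A2 := by
    rw [slc, hA, ← List.append_assoc,
      List.take_left' (by simp [ha, hb]), Nat.add_sub_cancel,
      List.drop_left' ha.symm]
  have hP0 : ∃ s, a + 1 ≤ s ∧ s ≤ a + b ∧ C.Sublist (slc A s (a + b)) := by
    refine ⟨a + 1, le_refl _, by omega, ?_⟩
    rw [hslc0]; exact hC2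
  -- choose minimal f
  let P : ℕ → Prop := fun f => ∃ s, a + 1 ≤ s ∧ s ≤ f ∧ C.Sublist (slc A s f)
  have hPab : P (a + b) := hP0
  classical
  let f := Nat.find ⟨a + b, hPab⟩
  have hPf : P f := Nat.find_spec ⟨a + b, hPab⟩
  have hfle : f ≤ a + b := Nat.find_min' _ hPab
  have hfmin : ∀ k, k < f → ¬ P k := fun k hk => Nat.find_min _ hk
  -- choose maximal s
  obtain ⟨s0, hs0a, hs0f, hs0C⟩ := hPf
  let Q : ℕ → Prop := fun s => a + 1 ≤ s ∧ s ≤ f ∧ C.Sublist (slc A s f)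
  let s := Nat.findGreatest Q f
  have hQs : Q s := Nat.findGreatest_spec (m := s0) hs0f ⟨hs0a, hs0f, hs0C⟩
  obtain ⟨hsa, hsf, hsC⟩ := hQs
  have hsmax : ∀ k, s < k → k ≤ f → ¬ Q k := fun k h1 h2 => Nat.findGreatest_is_greatest h1 h2
  have hAlen : a + b ≤ A.length := by
    rw [hA]; simp only [List.length_append]; omega
  refine ⟨s, f, ⟨by omega, hsf, by omega, hsC, ?_, ?_⟩, ?_, ?_⟩
  · -- ¬ C ⊑ slc A (s+1) f
    intro hcon
    by_cases hsf' : s + 1 ≤ f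
    · exact hsmax (s + 1) (by omega) hsf' ⟨by omega, hsf', hcon⟩
    · rw [slc_eq_nil A (by omega)] at hcon
      exact hC (List.sublist_nil.mp hcon)
  · -- ¬ C ⊑ slc A s (f-1)
    intro hcon
    by_cases hsf' : s ≤ f - 1
    · exact hfmin (f - 1) (by omega) ⟨s, hsa, hsf', hcon⟩
    · rw [slc_eq_nil A (by omega)] at hcon
      exact hC (List.sublist_nil.mp hcon)
  · -- X ⊑ slc A 1 (s-1)
    rw [slc_one]
    have h1 : A.take a = A1 := by rw [hA]; simp [ha]
    have h2 : (A.take (s - 1)).take a = A.take a := by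
      rw [List.take_take, min_eq_left (by omega)]
    have h5 : X.Sublist ((A.take (s - 1)).take a) := by rw [h2, h1]; exact hX1
    exact h5.trans (List.take_sublist _ _)
  · -- Y ⊑ slc A (f+1) len
    rw [slc_last]
    have h3 : A.drop (a + b) = A3 := by rw [hA]; simp [ha, hb, List.drop_append]
    have h4 : (A.drop f).drop (a + b - f) = A.drop (a + b) := by
      rw [List.drop_drop]; congr 1; omega
    have h5 : Y.Sublist ((A.drop f).drop (a + b - f)) := by rw [h4, h3]; exact hY3
    exact h5.trans (List.drop_sublist _ _)

/-- Lemma 2: every STR-IC-LCS `Z` of `A, B, C` decomposes as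
`Z = X · C · Y` where, for some minimal `C`-intervals `[s,f]` of `A` and `[s',f']` of `B`,
`X` is an LCS of `A[1..s-1]`, `B[1..s'-1]` and `Y` is an LCS of `A[f+1..M]`, `B[f'+1..N]`. -/
theorem strIcLcs_decomposition {α : Type*} (A B C Z : List α) (M N : ℕ)
    (hM : A.length = M) (hN : B.length = N) (hC : C ≠ [])
    (hZ : IsSTRICLCS A B C Z) :
    ∃ s f s' f' X Y,
      MinCInterval A C s f ∧ MinCInterval B C s' f' ∧
      Z = X ++ C ++ Y ∧
      IsLCS (slc A 1 (s - 1)) (slc B 1 (s' - 1)) X ∧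
      IsLCS (slc A (f + 1) M) (slc B (f' + 1) N) Y := by
  obtain ⟨hinf, hZA, hZB, hmax⟩ := hZ
  obtain ⟨X, Y, hXY⟩ := hinf
  subst hM; subst hN
  have hZeq : Z = X ++ C ++ Y := hXY.symm
  have hA' : (X ++ C ++ Y).Sublist A := hZeq ▸ hZA
  have hB' : (X ++ C ++ Y).Sublist B := hZeq ▸ hZB
  obtain ⟨s, f, hmi, hXA, hYA⟩ := exists_min_interval A C X Y hC hA'
  obtain ⟨s', f', hmi', hXB, hYB⟩ := exists_min_interval B C X Y hC hB'
  obtain ⟨hs1, hsf, hfA, hCA, hA5, hA6⟩ := hmi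
  obtain ⟨hs1', hsf', hfB, hCB, hB5, hB6⟩ := hmi'
  refine ⟨s, f, s', f', X, Y, ⟨hs1, hsf, hfA, hCA, hA5, hA6⟩, ⟨hs1', hsf', hfB, hCB, hB5, hB6⟩, hZeq, ⟨hXA, hXB, ?_⟩, ⟨hYA, hYB, ?_⟩⟩
  · intro W hWA hWB
    have hWinf : C.IsInfix (W ++ C ++ Y) := ⟨W, Y, rfl⟩
    have hWsubA : (W ++ C ++ Y).Sublist A :=
      sublist_of_parts A C W Y (by omega) hWA hCA hYA
    have hWsubB : (W ++ C ++ Y).Sublist B :=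
      sublist_of_parts B C W Y (by omega) hWB hCB hYB
    have := hmax (W ++ C ++ Y) hWinf hWsubA hWsubB
    simp [hZeq] at this
    omega
  · intro W hWA hWB
    have hWinf : C.IsInfix (X ++ C ++ W) := ⟨X, W, rfl⟩
    have hWsubA : (X ++ C ++ W).Sublist A :=
      sublist_of_parts A C X W (by omega) hXA hCA hWA
    have hWsubB : (X ++ C ++ W).Sublist B :=
      sublist_of_parts B C X W (by omega) hXB hCB hWB
    have := hmax (X ++ C ++ W) hWinf hWsubA hWsubB
    simp [hZeq] at this
    omega

end StrIcLcs
end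

section
/- Let A and C be strings with C nonempty. If [s,f] and [s',f'] are distinct minimal C-intervals of A, then either (s < s' and f < f') or (s' < s and f' < f). In particular, no minimal C-interval of A is contained in another minimal C-interval of A. -/
namespace StrIcLcs

lemma slc_sublist {α : Type*} (A : List α) {s f s' f' : ℕ} (hs : s' ≤ s) (hf : f ≤ f') :
    (slc A s f).Sublist (slc A s' f') := by
  have h : slc A s f
      = List.drop ((s-1)-(s'-1)) (List.take (f-(s'-1)) (slc A s' f')) := by
    simp only [slc, List.drop_take, List.take_take, List.drop_drop]
    rw [show (f - (s' - 1)) ⊓ (f' - (s' - 1)) - (s - 1 - (s' - 1)) = f - (s - 1) by omega,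
       show s' - 1 + (s - 1 - (s' - 1)) = s - 1 by omega]
  rw [h]
  exact (List.drop_sublist _ _).trans (List.take_sublist _ _)

lemma minC_antichain {α : Type*} {A C : List α} {s f s' f' : ℕ}
    (h1 : MinCInterval A C s f) (h2 : MinCInterval A C s' f')
    (hs : s ≤ s') (hf : f' ≤ f) : s = s' ∧ f = f' := by
  obtain ⟨hs1, hsf, hfA, hsub, hmin1, hmin2⟩ := h1
  obtain ⟨hs1', hsf', hfA', hsub', -, -⟩ := h2
  constructor
  · by_contra hne
    have hlt : s + 1 ≤ s' := by omega
    exact hmin1 (hsub'.trans (slc_sublist A hlt hf))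
  · by_contra hne
    have hlt : f' ≤ f - 1 := by omega
    exact hmin2 (hsub'.trans (slc_sublist A hs hlt))

/-- distinct minimal `C`-intervals of `A` are strictly ordered:
either `s < s'` and `f < f'`, or `s' < s` and `f' < f`; in particular no minimal
`C`-interval is contained in another. -/
theorem minCIntervals_strictly_ordered {α : Type*} (A C : List α) (hC : C ≠ [])
    (s f s' f' : ℕ) (h1 : MinCInterval A C s f) (h2 : MinCInterval A C s' f')
    (hne : (s, f) ≠ (s', f')) :
    (s < s' ∧ f < f') ∨ (s' < s ∧ f' < f) := by
  rcases lt_trichotomy s s' with h | h | h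
  · left
    refine ⟨h, ?_⟩
    by_contra hle
    have := minC_antichain h1 h2 h.le (by omega)
    omega
  · exfalso
    have hfne : f ≠ f' := by
      intro hf; exact hne (by simp [h, hf])
    rcases lt_or_gt_of_ne hfne with hlt | hlt
    · have := minC_antichain h2 h1 h.ge hlt.le; omega
    · have := minC_antichain h1 h2 h.le hlt.le; omega
  · right
    refine ⟨h, ?_⟩
    by_contra hle
    have := minC_antichain h2 h1 h.le (by omega)
    omega

end StrIcLcs
end

section
/- Let A and B be strings of lengths M and N, let α and β be distinct characters, and let d ≥ 1 and d' ≥ 1 be integers with d ≤ M and d' ≤ N. If A[M-d+1..M] = α^d and B[N-d'+1..N] = β^{d'}, then lcs(A, B) = max{ lcs(A[1..M-d], B), lcs(A, B[1..N-d']) }. -/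
namespace StrIcLcs

/-- Lemma 5, from Bunke–Csirik: if `A` ends with `α^d` and `B` ends with
`β^{d'}` for distinct characters `α ≠ β`, then
`lcs(A, B) = max( lcs(A[1..M-d], B), lcs(A, B[1..N-d']) )`. -/
theorem lcs_distinct_suffix_runs {α : Type*} (A B : List α) (M N : ℕ)
    (hM : A.length = M) (hN : B.length = N) (a b : α) (hab : a ≠ b) (d d' : ℕ)
    (hd : 1 ≤ d) (hd' : 1 ≤ d') (hdM : d ≤ M) (hd'N : d' ≤ N)
    (hA : slc A (M - d + 1) M = List.replicate d a)
    (hB : slc B (N - d' + 1) N = List.replicate d' b) :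
    lcsLen A B = max (lcsLen (slc A 1 (M - d)) B) (lcsLen A (slc B 1 (N - d'))) := by
  -- basic facts about the sets
  have hset : ∀ (P Q : List α), {k | ∃ Z : List α, Z.Sublist P ∧ Z.Sublist Q ∧ Z.length = k}.Nonempty :=
    fun P Q => ⟨0, [], by simp⟩
  have hbdd : ∀ (P Q : List α), BddAbove {k | ∃ Z : List α, Z.Sublist P ∧ Z.Sublist Q ∧ Z.length = k} := by
    intro P Q
    exact ⟨P.length, fun k hk => by obtain ⟨Z, h1, h2, h3⟩ := hk; exact h3 ▸ h1.length_le⟩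
  -- slices identified
  have hAtake : slc A 1 (M - d) = A.take (M - d) := by simp [slc]
  have hBtake : slc B 1 (N - d') = B.take (N - d') := by simp [slc]
  have hAsplit : A = A.take (M - d) ++ List.replicate d a := by
    have : slc A (M - d + 1) M = A.drop (M - d) := by
      simp [slc, List.take_of_length_le hM.le]
    rw [← hA, this, List.take_append_drop]
  have hBsplit : B = B.take (N - d') ++ List.replicate d' b := by
    have : slc B (N - d' + 1) N = B.drop (N - d') := by
      simp [slc, List.take_of_length_le hN.le]
    rw [← hB, this, List.take_append_drop]
  rw [hAtake, hBtake]
  -- lcsLen monotone in each argument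
  have mono : ∀ (P' P Q' Q : List α), P'.Sublist P → Q'.Sublist Q →
      lcsLen P' Q' ≤ lcsLen P Q := by
    intro P' P Q' Q hP hQ
    refine csSup_le_csSup (hbdd P Q) (hset P' Q') ?_
    rintro k ⟨Z, h1, h2, h3⟩
    exact ⟨Z, h1.trans hP, h2.trans hQ, h3⟩
  apply le_antisymm
  · -- take a maximal common subsequence
    obtain ⟨Z, hZA, hZB, hZlen⟩ :
        ∃ Z : List α, Z.Sublist A ∧ Z.Sublist B ∧ Z.length = lcsLen A B :=
      Nat.sSup_mem (hset A B) (hbdd A B)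
    rw [← hZlen]
    -- split Z against both decompositions
    have hZA' := hZA
    have hZB' := hZB
    rw [hAsplit, List.sublist_append_iff] at hZA
    obtain ⟨Z1, Za, hZeq1, hZ1, hZa⟩ := hZA
    rw [List.sublist_replicate_iff] at hZa
    obtain ⟨k, hk, rfl⟩ := hZa
    rw [hBsplit, List.sublist_append_iff] at hZB
    obtain ⟨Z2, Zb, hZeq2, hZ2, hZb⟩ := hZB
    rw [List.sublist_replicate_iff] at hZb
    obtain ⟨k', hk', rfl⟩ := hZb
    rcases Nat.eq_zero_or_pos k with hk0 | hk0
    · -- Z is a sublist of A.take (M-d)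
      subst hk0
      simp only [List.replicate_zero, List.append_nil] at hZeq1
      refine le_max_of_le_left (le_csSup (hbdd _ B) ?_)
      exact ⟨Z, hZeq1 ▸ hZ1, hZB', rfl⟩
    · rcases Nat.eq_zero_or_pos k' with hk'0 | hk'0
      · subst hk'0
        simp only [List.replicate_zero, List.append_nil] at hZeq2
        refine le_max_of_le_right (le_csSup (hbdd A _) ?_)
        exact ⟨Z, hZA', hZeq2 ▸ hZ2, rfl⟩
      · -- contradiction: Z ends in both a and b
        exfalso
        have h1 : Z.getLast? = some a := by
          rw [hZeq1]
          obtain ⟨m, rfl⟩ : ∃ m, k = m + 1 := ⟨k - 1, (Nat.succ_pred_eq_of_pos hk0).symm⟩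
          rw [List.replicate_succ', ← List.append_assoc]
          exact List.getLast?_concat
        have h2 : Z.getLast? = some b := by
          rw [hZeq2]
          obtain ⟨m, rfl⟩ : ∃ m, k' = m + 1 := ⟨k' - 1, (Nat.succ_pred_eq_of_pos hk'0).symm⟩
          rw [List.replicate_succ', ← List.append_assoc]
          exact List.getLast?_concat
        rw [h1] at h2
        exact hab (Option.some_injective _ h2)
  · exact max_le (mono _ _ _ _ (List.take_sublist _ _) (List.Sublist.refl _))
      (mono _ _ _ _ (List.Sublist.refl _) (List.take_sublist _ _))

end StrIcLcs
end

section
/- Let A and B be strings of lengths M and N, let α and β be distinct characters, and let d ≥ 1 and d' ≥ 1 be integers with d ≤ M and d' ≤ N. If A[1..d] = α^d and B[1..d'] = β^{d'}, then lcs(A, B) = max{ lcs(A[d+1..M], B), lcs(A, B[d'+1..N]) }. -/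
namespace StrIcLcs

private lemma cons_sublist_rep {α : Type*} {a c : α} {Z R : List α} :
    ∀ {d : ℕ}, (c :: Z).Sublist (List.replicate d a ++ R) → c ≠ a → (c :: Z).Sublist R := by
  intro d
  induction d with
  | zero => intro h _; simpa using h
  | succ n ih =>
    intro h hca
    rw [List.replicate_succ, List.cons_append] at h
    cases h with
    | cons _ h => exact ih h hca
    | cons_cons => exact absurd rfl hca

private lemma lcs_bdd {α : Type*} (X Y : List α) :
    BddAbove {k | ∃ Z : List α, Z.Sublist X ∧ Z.Sublist Y ∧ Z.length = k} :=
  ⟨X.length, fun k ⟨Z, h1, _, h3⟩ => h3 ▸ h1.length_le⟩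

private lemma lcs_ne {α : Type*} (X Y : List α) :
    ({k | ∃ Z : List α, Z.Sublist X ∧ Z.Sublist Y ∧ Z.length = k}).Nonempty :=
  ⟨0, [], List.nil_sublist _, List.nil_sublist _, rfl⟩

/-- if `A` begins with `α^d` and `B` begins with `β^{d'}` for distinct
characters `α ≠ β`, then `lcs(A, B) = max( lcs(A[d+1..M], B), lcs(A, B[d'+1..N]) )`. -/
theorem lcs_distinct_prefix_runs {α : Type*} (A B : List α) (M N : ℕ)
    (hM : A.length = M) (hN : B.length = N) (a b : α) (hab : a ≠ b) (d d' : ℕ)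
    (hd : 1 ≤ d) (hd' : 1 ≤ d') (hdM : d ≤ M) (hd'N : d' ≤ N)
    (hA : slc A 1 d = List.replicate d a)
    (hB : slc B 1 d' = List.replicate d' b) :
    lcsLen A B = max (lcsLen (slc A (d + 1) M) B) (lcsLen A (slc B (d' + 1) N)) := by
  subst hM hN
  have e1 : slc A (d + 1) A.length = A.drop d := by simp [slc]
  have e2 : slc B (d' + 1) B.length = B.drop d' := by simp [slc]
  rw [e1, e2]
  have htA : A.take d = List.replicate d a := by simpa [slc] using hA
  have hA' : A = List.replicate d a ++ A.drop d := by
    rw [← htA, List.take_append_drop]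
  have htB : B.take d' = List.replicate d' b := by simpa [slc] using hB
  have hB' : B = List.replicate d' b ++ B.drop d' := by
    rw [← htB, List.take_append_drop]
  have key : ∀ Z : List α, Z.Sublist A → Z.Sublist B →
      Z.Sublist (A.drop d) ∨ Z.Sublist (B.drop d') := by
    intro Z hZA hZB
    match Z with
    | [] => exact Or.inl (List.nil_sublist _)
    | c :: Z' =>
      by_cases hc : c = a
      · right
        rw [hB'] at hZB
        exact cons_sublist_rep hZB (hc ▸ hab)
      · left
        rw [hA'] at hZA
        exact cons_sublist_rep hZA hc
  unfold lcsLen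
  apply le_antisymm
  · apply csSup_le (lcs_ne A B)
    rintro k ⟨Z, hZA, hZB, rfl⟩
    rcases key Z hZA hZB with h | h
    · exact le_max_of_le_left (le_csSup (lcs_bdd _ _) ⟨Z, h, hZB, rfl⟩)
    · exact le_max_of_le_right (le_csSup (lcs_bdd _ _) ⟨Z, hZA, h, rfl⟩)
  · rw [max_le_iff]
    constructor
    · apply csSup_le_csSup (lcs_bdd A B) (lcs_ne _ _)
      rintro k ⟨Z, h1, h2, rfl⟩
      exact ⟨Z, h1.trans (List.drop_sublist _ _), h2, rfl⟩
    · apply csSup_le_csSup (lcs_bdd A B) (lcs_ne _ _)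
      rintro k ⟨Z, h1, h2, rfl⟩
      exact ⟨Z, h1, h2.trans (List.drop_sublist _ _), rfl⟩

end StrIcLcs
end

section
/- Let A be a string of length M, let C be a nonempty string of length K, and let p be an integer with 1 ≤ p < M. Then the number of minimal C-intervals [s,f] of A with s ≤ p < f is at most K − 1. -/
namespace StrIcLcs

lemma slc_split {α : Type*} (A : List α) {s p f : ℕ} (hs : s - 1 ≤ p) (hpf : p ≤ f)
    (hf : f ≤ A.length) : slc A s f = slc A s p ++ slc A (p + 1) f := by
  unfold slc
  have hlen : (A.take p).length = p := by
    rw [List.length_take]; omega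
  have h1 : A.take p = (A.take f).take p := by
    rw [List.take_take, min_eq_left hpf]
  conv_lhs => rw [show A.take f = (A.take f).take p ++ (A.take f).drop p from
    (List.take_append_drop p (A.take f)).symm]
  rw [List.drop_append, ← h1, hlen]
  have : s - 1 - p = 0 := by omega
  rw [this, List.drop_zero]
  simp

/-- monotone in `f`. -/
lemma slc_mono_f {α : Type*} (A : List α) {s p f : ℕ} (hs : s - 1 ≤ p) (hpf : p ≤ f)
    (hf : f ≤ A.length) : (slc A s p).Sublist (slc A s f) := by
  rw [slc_split A hs hpf hf]; exact List.sublist_append_left _ _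

/-- monotone in `s` (suffix). -/
lemma slc_mono_s {α : Type*} (A : List α) {s s' f : ℕ} (h1 : 1 ≤ s) (hss : s ≤ s') :
    (slc A s' f).Sublist (slc A s f) := by
  unfold slc
  have : s' - 1 = (s - 1) + (s' - s) := by omega
  rw [this, ← List.drop_drop]
  exact (List.drop_sublist _ _)

lemma slc_cons {α : Type*} (A : List α) {s f : ℕ} (h1 : 1 ≤ s) (h2 : s ≤ f)
    (h3 : f ≤ A.length) (hsA : s - 1 < A.length) :
    slc A s f = A[s - 1] :: slc A (s + 1) f := by
  unfold slc
  have hlt : s - 1 < (A.take f).length := by rw [List.length_take]; omega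
  rw [List.drop_eq_getElem_cons hlt, List.getElem_take]
  have h : s - 1 + 1 = s + 1 - 1 := by omega
  rw [h]

/-- from Lemma 3: for any position `1 ≤ p < M` of `A`, the number of
minimal `C`-intervals `[s,f]` of `A` with `s ≤ p < f` is at most `K - 1 = |C| - 1`. -/
theorem card_minCIntervals_crossing_le {α : Type*} (A C : List α) (M K p : ℕ)
    (hM : A.length = M) (hK : C.length = K) (hC : C ≠ [])
    (hp1 : 1 ≤ p) (hp2 : p < M) :
    {q : ℕ × ℕ | MinCInterval A C q.1 q.2 ∧ q.1 ≤ p ∧ p < q.2}.ncard ≤ K - 1 := by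
  classical
  subst hM hK
  set S := {q : ℕ × ℕ | MinCInterval A C q.1 q.2 ∧ q.1 ≤ p ∧ p < q.2} with hS
  have hK1 : 1 ≤ C.length := List.length_pos_iff.mpr hC
  set J : ℕ × ℕ → ℕ := fun q => Nat.findGreatest (fun j => (C.take j).Sublist (slc A q.1 p)) C.length with hJ
  -- basic facts for members of S
  have hmem : ∀ q ∈ S, (C.take (J q)).Sublist (slc A q.1 p) := by
    intro q hq
    exact Nat.findGreatest_spec (P := fun j => (C.take j).Sublist (slc A q.1 p)) (Nat.zero_le _) (List.nil_sublist _)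
  have hJ1 : ∀ q ∈ S, 1 ≤ J q := by
    rintro ⟨s, f⟩ ⟨⟨hs1, hsf, hfA, hsub, hnot1, _⟩, hsp, hpf⟩
    apply Nat.le_findGreatest hK1
    -- C starts with A[s-1]
    have hsA : s - 1 < A.length := by omega
    have hcons : slc A s f = A[s - 1] :: slc A (s + 1) f := slc_cons A hs1 hsf hfA hsA
    rw [hcons] at hsub
    rcases List.sublist_cons_iff.mp hsub with h | ⟨r, hr, _⟩
    · exact absurd h hnot1
    · have hconsp : slc A s p = A[s - 1] :: slc A (s + 1) p := by
        apply slc_cons A hs1 hsp (by omega) hsA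
      rw [hconsp]
      have : C.take 1 = [A[s - 1]] := by
        rw [hr]; simp
      rw [this]
      exact (List.singleton_sublist.mpr List.mem_cons_self)
  have hJlt : ∀ q ∈ S, J q < C.length := by
    rintro ⟨s, f⟩ hq
    obtain ⟨⟨hs1, hsf, hfA, hsub, hnot1, hnot2⟩, hsp, hpf⟩ := hq
    by_contra hge
    have hJK : J ⟨s, f⟩ = C.length := le_antisymm (Nat.findGreatest_le _) (by omega)
    have h1 := hmem ⟨s, f⟩ (by exact ⟨⟨hs1, hsf, hfA, hsub, hnot1, hnot2⟩, hsp, hpf⟩)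
    rw [hJK, List.take_length] at h1
    have h2 : (slc A s p).Sublist (slc A s (f - 1)) :=
      slc_mono_f A (by omega) (by omega) (by omega)
    exact hnot2 (h1.trans h2)
  have hdrop : ∀ q ∈ S, (C.drop (J q)).Sublist (slc A (p + 1) q.2) := by
    rintro ⟨s, f⟩ hq
    obtain ⟨⟨hs1, hsf, hfA, hsub, hnot1, hnot2⟩, hsp, hpf⟩ := hq
    have hsplit : slc A s f = slc A s p ++ slc A (p + 1) f :=
      slc_split A (by omega) (by omega) hfA
    rw [hsplit] at hsub
    rcases List.sublist_append_iff.mp hsub with ⟨C1, C2, hC12, hC1, hC2⟩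
    have hilen : C1.length ≤ C.length := by
      rw [hC12]; simp
    have htake : C.take C1.length = C1 := by
      rw [hC12, List.take_left]
    have hile : C1.length ≤ J ⟨s, f⟩ := by
      apply Nat.le_findGreatest hilen
      rw [htake]; exact hC1
    have hdropeq : C.drop (J ⟨s, f⟩) = C2.drop (J ⟨s, f⟩ - C1.length) := by
      rw [hC12, List.drop_append, List.drop_eq_nil_of_le hile, List.nil_append]
    rw [hdropeq]
    exact (List.drop_sublist _ _).trans hC2
  -- injectivity
  have hinj : Set.InjOn J S := by
    -- auxiliary: same s forces same f
    have aux2 : ∀ s f1 f2, (⟨s, f1⟩ : ℕ × ℕ) ∈ S → (⟨s, f2⟩ : ℕ × ℕ) ∈ S → f1 < f2 → False := by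
      rintro s f1 f2 ⟨⟨hs1, hsf, hfA, hsub, _, _⟩, hsp, hpf⟩ ⟨⟨_, _, hfA2, _, _, hnot2⟩, _, _⟩ hlt
      apply hnot2
      have : (slc A s f1).Sublist (slc A s (f2 - 1)) :=
        slc_mono_f A (by omega) (by omega) (by omega)
      exact hsub.trans this
    have aux : ∀ q1 q2, q1 ∈ S → q2 ∈ S → J q1 = J q2 → q1.1 < q2.1 → False := by
      rintro ⟨s1, f1⟩ ⟨s2, f2⟩ hq1 hq2 hJeq hlt
      have h1 := hdrop ⟨s1, f1⟩ hq1
      have h2 := hmem ⟨s2, f2⟩ hq2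
      obtain ⟨⟨hs11, hsf1, hfA1, hsub1, hnot11, _⟩, hsp1, hpf1⟩ := hq1
      obtain ⟨⟨hs21, hsf2, hfA2, _, _, _⟩, hsp2, hpf2⟩ := hq2
      apply hnot11
      have hCsplit : C = C.take (J ⟨s1, f1⟩) ++ C.drop (J ⟨s1, f1⟩) :=
        (List.take_append_drop _ C).symm
      have hcomb : C.Sublist (slc A s2 p ++ slc A (p + 1) f1) := by
        rw [hCsplit]
        exact List.Sublist.append (hJeq ▸ h2) h1
      have hsplit : slc A s2 f1 = slc A s2 p ++ slc A (p + 1) f1 :=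
        slc_split A (by omega) (by omega) hfA1
      rw [← hsplit] at hcomb
      exact hcomb.trans (slc_mono_s A (by omega) (by omega))
    rintro ⟨s1, f1⟩ hq1 ⟨s2, f2⟩ hq2 hJeq
    rcases lt_trichotomy s1 s2 with h | h | h
    · exact absurd (aux _ _ hq1 hq2 hJeq h) (fun x => x)
    · subst h
      rcases lt_trichotomy f1 f2 with h | h | h
      · exact absurd (aux2 _ _ _ hq1 hq2 h) (fun x => x)
      · rw [h]
      · exact absurd (aux2 _ _ _ hq2 hq1 h) (fun x => x)
    · exact absurd (aux _ _ hq2 hq1 hJeq.symm h) (fun x => x)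
  -- counting
  have hmaps : ∀ q ∈ S, J q ∈ Set.Icc 1 (C.length - 1) := by
    intro q hq
    exact ⟨hJ1 q hq, by have := hJlt q hq; omega⟩
  calc S.ncard ≤ (Set.Icc 1 (C.length - 1)).ncard :=
        Set.ncard_le_ncard_of_injOn J hmaps hinj (Set.finite_Icc _ _)
    _ = C.length - 1 := by
        rw [← Finset.coe_Icc, Set.ncard_coe_finset, Nat.card_Icc]
        omega

end StrIcLcs
end

section
/- Let A be a string of length M, let C = u·v where u and v are nonempty strings, and let p be an integer with 1 ≤ p < M. If [s,f] is a minimal C-interval of A with s ≤ p < f such that u is a subsequence of A[s..p] and v is a subsequence of A[p+1..f], then s is the largest index s' ≤ p such that u is a subsequence of A[s'..p], and f is the smallest index f' > p such that v is a subsequence of A[p+1..f']. Consequently, for each such factorization C = u·v there is at most one minimal C-interval [s,f] of A with s ≤ p < f, u a subsequence of A[s..p], and v a subsequence of A[p+1..f]. -/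
namespace StrIcLcs

lemma slc_append {α : Type*} (A : List α) (a b c : ℕ) (hab : a ≤ b + 1) (hbc : b ≤ c)
    (hbl : b ≤ A.length) : slc A a b ++ slc A (b + 1) c = slc A a c := by
  unfold slc
  have h1 : A.take b = (A.take c).take b := by
    rw [List.take_take, Nat.min_eq_left hbc]
  have h2 : A.take c = (A.take c).take b ++ (A.take c).drop b := (List.take_append_drop ..).symm
  have hlen : a - 1 ≤ ((A.take c).take b).length := by
    simp only [List.length_take, List.length_take]
    omega
  rw [show b + 1 - 1 = b from rfl]
  calc ((A.take b).drop (a-1)) ++ (A.take c).drop b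
      = (((A.take c).take b).drop (a-1)) ++ (A.take c).drop b := by rw [← h1]
    _ = (((A.take c).take b) ++ (A.take c).drop b).drop (a-1) :=
        (List.drop_append_of_le_length hlen).symm
    _ = (A.take c).drop (a-1) := by rw [List.take_append_drop]

lemma slc_mono_left {α : Type*} (A : List α) {s s' : ℕ} (f : ℕ) (h1 : 1 ≤ s) (h : s ≤ s') :
    (slc A s' f).Sublist (slc A s f) := by
  unfold slc
  rw [show s' - 1 = (s - 1) + (s' - s) from by omega, ← List.drop_drop]
  exact List.drop_sublist _ _

lemma slc_mono_right {α : Type*} (A : List α) (s : ℕ) {f f' : ℕ} (h : f' ≤ f) :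
    (slc A s f').Sublist (slc A s f) := by
  unfold slc
  rw [show A.take f' = (A.take f).take f' from by rw [List.take_take, Nat.min_eq_left h],
    List.drop_take]
  exact List.take_sublist _ _

lemma max_s_aux {α : Type*} (A C u v : List α) (p : ℕ) (hC : C = u ++ v)
    (hpl : p ≤ A.length) (s f : ℕ) (hmin : MinCInterval A C s f) (hsp : s ≤ p) (hpf : p < f)
    (hvf : v.Sublist (slc A (p + 1) f)) :
    ∀ s', 1 ≤ s' → s' ≤ p → u.Sublist (slc A s' p) → s' ≤ s := by
  intro s' h1 h2 h3
  by_contra h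
  push_neg at h
  apply hmin.2.2.2.2.1
  have hu' : u.Sublist (slc A (s + 1) p) := h3.trans (slc_mono_left A p (by omega) (by omega))
  rw [hC, ← slc_append A (s + 1) p f (by omega) (by omega) hpl]
  exact hu'.append hvf

lemma min_f_aux {α : Type*} (A C u v : List α) (p : ℕ) (hC : C = u ++ v)
    (hpl : p ≤ A.length) (s f : ℕ) (hmin : MinCInterval A C s f) (hsp : s ≤ p) (hpf : p < f)
    (hus : u.Sublist (slc A s p)) :
    ∀ f', p < f' → v.Sublist (slc A (p + 1) f') → f ≤ f' := by
  intro f' h1 h2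
  by_contra h
  push_neg at h
  apply hmin.2.2.2.2.2
  have hv' : v.Sublist (slc A (p + 1) (f - 1)) := h2.trans (slc_mono_right A (p + 1) (by omega))
  rw [hC, ← slc_append A s p (f - 1) (by omega) (by omega) hpl]
  exact hus.append hv' 

/-- let `C = u·v` with `u, v` nonempty and `1 ≤ p < M`. If `[s,f]` is a
minimal `C`-interval of `A` with `s ≤ p < f`, `u` a subsequence of `A[s..p]` and `v` a
subsequence of `A[p+1..f]`, then `s` is the largest index `s' ≤ p` with `u` a subsequence of
`A[s'..p]` and `f` is the smallest index `f' > p` with `v` a subsequence of `A[p+1..f']`;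
consequently, such a minimal `C`-interval is unique for each factorization `C = u·v`. -/
theorem minCInterval_crossing_unique {α : Type*} (A C u v : List α) (M p : ℕ)
    (hM : A.length = M) (hC : C = u ++ v) (hu : u ≠ []) (hv : v ≠ [])
    (hp1 : 1 ≤ p) (hp2 : p < M) (s f : ℕ)
    (hmin : MinCInterval A C s f) (hsp : s ≤ p) (hpf : p < f)
    (hus : u.Sublist (slc A s p)) (hvf : v.Sublist (slc A (p + 1) f)) :
    (∀ s', 1 ≤ s' → s' ≤ p → u.Sublist (slc A s' p) → s' ≤ s) ∧
    (∀ f', p < f' → v.Sublist (slc A (p + 1) f') → f ≤ f') ∧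
    (∀ s₂ f₂, MinCInterval A C s₂ f₂ → s₂ ≤ p → p < f₂ →
      u.Sublist (slc A s₂ p) → v.Sublist (slc A (p + 1) f₂) → s₂ = s ∧ f₂ = f) := by
  have hpl : p ≤ A.length := by omega
  refine ⟨max_s_aux A C u v p hC hpl s f hmin hsp hpf hvf,
    min_f_aux A C u v p hC hpl s f hmin hsp hpf hus, ?_⟩
  intro s₂ f₂ hmin₂ hsp₂ hpf₂ hus₂ hvf₂
  constructor
  · exact le_antisymm
      (max_s_aux A C u v p hC hpl s f hmin hsp hpf hvf s₂ hmin₂.1 hsp₂ hus₂)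
      (max_s_aux A C u v p hC hpl s₂ f₂ hmin₂ hsp₂ hpf₂ hvf₂ s hmin.1 hsp hus)
  · exact le_antisymm
      (min_f_aux A C u v p hC hpl s₂ f₂ hmin₂ hsp₂ hpf₂ hus₂ f hpf hvf)
      (min_f_aux A C u v p hC hpl s f hmin hsp hpf hus f₂ hpf₂ hvf₂)

end StrIcLcs
end

section
/- Let A be a string of length M, let C be a string of length K ≥ 2, and let p be an integer with 1 ≤ p < M. If [s,f] is a minimal C-interval of A with s ≤ p < f, then there exist nonempty strings u and v with C = u·v such that u is a subsequence of A[s..p] and v is a subsequence of A[p+1..f]. -/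
namespace StrIcLcs

/-- if `|C| = K ≥ 2`, `1 ≤ p < M`, and `[s,f]` is a minimal `C`-interval
of `A` with `s ≤ p < f`, then `C` factors as `C = u·v` with `u, v` nonempty, `u` a
subsequence of `A[s..p]` and `v` a subsequence of `A[p+1..f]`. -/
theorem minCInterval_crossing_split {α : Type*} (A C : List α) (M K p : ℕ)
    (hM : A.length = M) (hK : C.length = K) (hK2 : 2 ≤ K)
    (hp1 : 1 ≤ p) (hp2 : p < M) (s f : ℕ)
    (hmin : MinCInterval A C s f) (hsp : s ≤ p) (hpf : p < f) :
    ∃ u v : List α, C = u ++ v ∧ u ≠ [] ∧ v ≠ [] ∧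
      u.Sublist (slc A s p) ∧ v.Sublist (slc A (p + 1) f) := by
  obtain ⟨hs1, hsf, hfM, hsub, hns, hnf⟩ := hmin
  have hpM : p ≤ A.length := by omega
  have hlen : (A.take p).length = p := by
    rw [List.length_take]; omega
  -- split the slice at p
  have hsplit : slc A s f = slc A s p ++ slc A (p + 1) f := by
    unfold slc
    have h1 : A.take f = A.take p ++ (A.take f).drop p := by
      conv_lhs => rw [← List.take_append_drop p (A.take f)]
      rw [List.take_take, min_eq_left (le_of_lt hpf)]
    rw [h1, List.drop_append, hlen]
    have : s - 1 - p = 0 := by omega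
    rw [this, List.drop_zero]
    congr 2
  rw [hsplit, List.sublist_append_iff] at hsub
  obtain ⟨u, v, hC, hu, hv⟩ := hsub
  refine ⟨u, v, hC, ?_, ?_, hu, hv⟩
  · rintro rfl
    apply hns
    rw [List.nil_append] at hC
    subst hC
    have h2 : slc A (p + 1) f = List.drop (p - s) (slc A (s + 1) f) := by
      unfold slc; rw [List.drop_drop]; congr 1; omega
    rw [h2] at hv
    exact hv.trans (List.drop_sublist _ _)
  · rintro rfl
    apply hnf
    rw [List.append_nil] at hC
    subst hC
    have h2 : slc A s p = List.take (p - (s - 1)) (List.drop (s - 1) A) := by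
      unfold slc; rw [List.drop_take]
    have h3 : slc A s (f - 1) = List.take (f - 1 - (s - 1)) (List.drop (s - 1) A) := by
      unfold slc; rw [List.drop_take]
    rw [h2] at hu
    rw [h3]
    exact hu.trans (List.take_sublist_take_left (by omega))

end StrIcLcs
end

section
/- Let A and B be strings with run-length encodings RLE(A) = a_1^{M_1} ⋯ a_m^{M_m} and RLE(B) = b_1^{N_1} ⋯ b_n^{N_n}, and write M_{1..p} = M_1 + ⋯ + M_p and N_{1..q} = N_1 + ⋯ + N_q (with M_{1..0} = N_{1..0} = 0). Let i, j be positions with M_{1..p-1} < i ≤ M_{1..p} and N_{1..q-1} < j ≤ N_{1..q} for some 1 ≤ p ≤ m, 1 ≤ q ≤ n, and suppose a_p = b_q. Let d = min(i − M_{1..p-1}, j − N_{1..q-1}). Then lcs(A[1..i], B[1..j]) = lcs(A[1..i-d], B[1..j-d]) + d. -/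
namespace StrIcLcs

/-- `runs` is a valid run-length encoding: every exponent is positive and adjacent runs
carry distinct characters. -/
def RunsOK {α : Type*} (runs : List (α × ℕ)) : Prop :=
  (∀ r ∈ runs, 1 ≤ r.2) ∧ runs.Chain' (fun r r' => r.1 ≠ r'.1)

/-- The string encoded by a run-length encoding. -/
def decodeRLE {α : Type*} (runs : List (α × ℕ)) : List α :=
  (runs.map fun r => List.replicate r.2 r.1).flatten

/-- `sumTo runs p` is `M_{1..p} = M_1 + ⋯ + M_p`, the total length of the first `p` runs. -/
def sumTo {α : Type*} (runs : List (α × ℕ)) (p : ℕ) : ℕ :=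
  ((runs.take p).map Prod.snd).sum

/-! ### Auxiliary lemmas -/

lemma lcsSet_nonempty {α : Type*} (A B : List α) :
    {k | ∃ Z : List α, Z.Sublist A ∧ Z.Sublist B ∧ Z.length = k}.Nonempty :=
  ⟨0, [], List.nil_sublist _, List.nil_sublist _, rfl⟩

lemma lcsSet_bdd {α : Type*} (A B : List α) :
    BddAbove {k | ∃ Z : List α, Z.Sublist A ∧ Z.Sublist B ∧ Z.length = k} := by
  refine ⟨A.length, fun k hk => ?_⟩
  obtain ⟨Z, h1, _, h3⟩ := hk
  exact h3 ▸ h1.length_le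

lemma exists_lcs {α : Type*} (A B : List α) :
    ∃ Z : List α, Z.Sublist A ∧ Z.Sublist B ∧ Z.length = lcsLen A B :=
  Nat.sSup_mem (lcsSet_nonempty A B) (lcsSet_bdd A B)

lemma le_lcsLen {α : Type*} {A B Z : List α} (h1 : Z.Sublist A) (h2 : Z.Sublist B) :
    Z.length ≤ lcsLen A B :=
  le_csSup (lcsSet_bdd A B) ⟨Z, h1, h2, rfl⟩

lemma lcsLen_le {α : Type*} {A B : List α} {n : ℕ}
    (h : ∀ Z : List α, Z.Sublist A → Z.Sublist B → Z.length ≤ n) : lcsLen A B ≤ n :=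
  csSup_le (lcsSet_nonempty A B) (fun _ ⟨Z, h1, h2, h3⟩ => h3 ▸ h Z h1 h2)

lemma dropLast_sublist_of_concat {α : Type*} {Z X : List α} {c : α}
    (h : Z.Sublist (X ++ [c])) : Z.dropLast.Sublist X := by
  rw [List.sublist_append_iff] at h
  obtain ⟨l1, l2, rfl, h1, h2⟩ := h
  rcases List.sublist_singleton.mp h2 with rfl | rfl
  · simpa using (List.dropLast_sublist l1).trans h1
  · simpa [List.dropLast_concat] using h1

lemma lcsLen_concat {α : Type*} (X Y : List α) (c : α) :
    lcsLen (X ++ [c]) (Y ++ [c]) = lcsLen X Y + 1 := by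
  apply le_antisymm
  · apply lcsLen_le
    intro Z h1 h2
    have h3 : Z.dropLast.length ≤ lcsLen X Y :=
      le_lcsLen (dropLast_sublist_of_concat h1) (dropLast_sublist_of_concat h2)
    have := Z.length_dropLast
    omega
  · obtain ⟨Z, h1, h2, h3⟩ := exists_lcs X Y
    have := le_lcsLen (Z := Z ++ [c]) (h1.append (List.Sublist.refl [c]))
      (h2.append (List.Sublist.refl [c]))
    simpa [h3] using this

lemma lcsLen_take_succ {α : Type*} {A B : List α} {n m : ℕ} {c : α}
    (hA : A[n]? = some c) (hB : B[m]? = some c) :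
    lcsLen (A.take (n + 1)) (B.take (m + 1)) = lcsLen (A.take n) (B.take m) + 1 := by
  rw [List.take_succ, List.take_succ, hA, hB]
  exact lcsLen_concat _ _ c

lemma length_decode {α : Type*} (runs : List (α × ℕ)) :
    (decodeRLE runs).length = (runs.map Prod.snd).sum := by
  simp [decodeRLE, Function.comp_def]

lemma sumTo_succ {α : Type*} {runs : List (α × ℕ)} {k : ℕ} {c : α} {M : ℕ}
    (h : runs[k]? = some (c, M)) : sumTo runs (k + 1) = sumTo runs k + M := by
  obtain ⟨hk, hg⟩ := List.getElem?_eq_some_iff.mp h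
  have ht : (runs.take k).concat runs[k] = runs.take (k + 1) := List.take_concat_get hk
  simp [sumTo, ← ht, hg]

lemma decode_getElem? {α : Type*} {runs : List (α × ℕ)} {k : ℕ} {c : α} {M : ℕ}
    (h : runs[k]? = some (c, M)) {t : ℕ}
    (h1 : sumTo runs k ≤ t) (h2 : t < sumTo runs k + M) :
    (decodeRLE runs)[t]? = some c := by
  obtain ⟨hk, hg⟩ := List.getElem?_eq_some_iff.mp h
  have hsplit : runs = runs.take k ++ runs[k] :: runs.drop (k + 1) := by
    rw [← List.drop_eq_getElem_cons hk, List.take_append_drop]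
  have hdec : decodeRLE runs =
      decodeRLE (runs.take k) ++ (List.replicate M c ++ decodeRLE (runs.drop (k + 1))) := by
    conv_lhs => rw [hsplit]
    simp [decodeRLE, hg]
  have hlen : (decodeRLE (runs.take k)).length = sumTo runs k := by
    rw [length_decode]; rfl
  rw [hdec, List.getElem?_append_right (by omega), hlen,
    List.getElem?_append_left (by simp; omega), List.getElem?_replicate]
  simp
  omega

/-- let `RLE(A) = a_1^{M_1} ⋯ a_m^{M_m}`, `RLE(B) = b_1^{N_1} ⋯ b_n^{N_n}`,
and let `i`, `j` lie in the `p`-th run of `A` and the `q`-th run of `B` respectively, with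
`a_p = b_q`. Then with `d = min(i - M_{1..p-1}, j - N_{1..q-1})`,
`lcs(A[1..i], B[1..j]) = lcs(A[1..i-d], B[1..j-d]) + d`. -/
theorem lcs_prefix_same_run_char {α : Type*} (A B : List α)
    (runsA runsB : List (α × ℕ))
    (hA : A = decodeRLE runsA) (hAok : RunsOK runsA)
    (hB : B = decodeRLE runsB) (hBok : RunsOK runsB)
    (p q i j : ℕ) (hp1 : 1 ≤ p) (hq1 : 1 ≤ q)
    (ap bq : α) (Mp Nq : ℕ)
    (hap : runsA[p - 1]? = some (ap, Mp)) (hbq : runsB[q - 1]? = some (bq, Nq))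
    (hi1 : sumTo runsA (p - 1) < i) (hi2 : i ≤ sumTo runsA p)
    (hj1 : sumTo runsB (q - 1) < j) (hj2 : j ≤ sumTo runsB q)
    (hab : ap = bq) :
    lcsLen (slc A 1 i) (slc B 1 j) =
      lcsLen (slc A 1 (i - min (i - sumTo runsA (p - 1)) (j - sumTo runsB (q - 1))))
          (slc B 1 (j - min (i - sumTo runsA (p - 1)) (j - sumTo runsB (q - 1)))) +
        min (i - sumTo runsA (p - 1)) (j - sumTo runsB (q - 1)) := by
  have hslc : ∀ (L : List α) (x : ℕ), slc L 1 x = L.take x := by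
    intro L x; simp [slc]
  set sA := sumTo runsA (p - 1) with hsA
  set sB := sumTo runsB (q - 1) with hsB
  set d := min (i - sA) (j - sB) with hd
  have hspA : sumTo runsA p = sA + Mp := by
    have := sumTo_succ hap
    rwa [show p - 1 + 1 = p by omega] at this
  have hspB : sumTo runsB q = sB + Nq := by
    have := sumTo_succ hbq
    rwa [show q - 1 + 1 = q by omega] at this
  have hAget : ∀ t, sA ≤ t → t < i → A[t]? = some ap := fun t h1 h2 =>
    hA ▸ decode_getElem? hap h1 (by omega)
  have hBget : ∀ t, sB ≤ t → t < j → B[t]? = some ap := fun t h1 h2 =>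
    hB ▸ (hab ▸ decode_getElem? hbq h1 (by omega))
  have key : ∀ k, k ≤ d →
      lcsLen (A.take i) (B.take j) = lcsLen (A.take (i - k)) (B.take (j - k)) + k := by
    intro k
    induction k with
    | zero => simp
    | succ k ih =>
      intro hk
      rw [ih (by omega)]
      have e1 : i - k = (i - (k + 1)) + 1 := by omega
      have e2 : j - k = (j - (k + 1)) + 1 := by omega
      rw [e1, e2, lcsLen_take_succ (hAget _ (by omega) (by omega))
        (hBget _ (by omega) (by omega))]
      omega
  rw [hslc, hslc, hslc, hslc]
  exact key d le_rfl

end StrIcLcs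
end

section
/- Let A be a string of length M, let C be a nonempty string, and let s_0 be an integer with 0 ≤ s_0 < M such that C is a subsequence of A[s_0+1..M]. Let f be the smallest index with C a subsequence of A[s_0+1..f], and let s be the largest index with s_0+1 ≤ s ≤ f and C a subsequence of A[s..f]. Then [s,f] is a minimal C-interval of A. -/
namespace StrIcLcs

/-- if `C` is a subsequence of `A[s₀+1..M]`, `f` is the smallest index
with `C` a subsequence of `A[s₀+1..f]`, and `s` is the largest index with
`s₀+1 ≤ s ≤ f` and `C` a subsequence of `A[s..f]`, then `[s,f]` is a minimal
`C`-interval of `A`. -/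
theorem forward_backward_search_minCInterval {α : Type*} (A C : List α) (M : ℕ)
    (hM : A.length = M) (hC : C ≠ []) (s₀ f s : ℕ) (hs₀ : s₀ < M)
    (hsub : C.Sublist (slc A (s₀ + 1) M))
    (hf1 : C.Sublist (slc A (s₀ + 1) f))
    (hf2 : ∀ f', C.Sublist (slc A (s₀ + 1) f') → f ≤ f')
    (hs1 : s₀ + 1 ≤ s) (hs2 : s ≤ f) (hs3 : C.Sublist (slc A s f))
    (hs4 : ∀ s', s₀ + 1 ≤ s' → s' ≤ f → C.Sublist (slc A s' f) → s' ≤ s) :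
    MinCInterval A C s f := by
  have hslc_mono : ∀ s' s'' f', s' ≤ s'' →
      (slc A s'' f').Sublist (slc A s' f') := by
    intro s' s'' f' h
    unfold slc
    have : s'' - 1 = (s'' - 1 - (s' - 1)) + (s' - 1) := by omega
    rw [this, ← List.drop_drop]
    exact (List.drop_sublist _ _).drop _
  have hfM : f ≤ A.length := by rw [hM]; exact hf2 M hsub
  have hs1' : 1 ≤ s := le_trans (by omega) hs1
  refine ⟨hs1', hs2, hfM, hs3, ?_, ?_⟩
  · intro h
    by_cases hsf : s + 1 ≤ f
    · have := hs4 (s + 1) (by omega) hsf h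
      omega
    · have : slc A (s + 1) f = [] := by
        unfold slc
        apply List.drop_eq_nil_of_le
        have := List.length_take_le f A
        omega
      rw [this] at h
      exact hC (List.sublist_nil.mp h)
  · intro h
    have h2 : C.Sublist (slc A (s₀ + 1) (f - 1)) :=
      h.trans (hslc_mono _ _ _ hs1)
    have := hf2 _ h2
    have hf1' : 1 ≤ f := le_trans hs1' hs2
    omega

end StrIcLcs
end
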